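/- arXiv:2411.14766 — 3 statements merged into one kernel-verified Lean document; each statement's English description precedes it below -/
import Mathlib

section
/- Let 0 < α < 1 and for each real x ≥ 1 define S(x) = ∑_{k=0}^{∞} ∏_{m=0}^{k} (1 - 1/(2(x+m)^α)). Then S(x) is finite for every x ≥ 1, and x^{-α} S(x) → 2 as x → ∞. -/
/-!
The lower bound `S(x) ≥ 2x^α - 1` comes from bounding every factor below by the first one,
`1 - 1/(2x^α)`, and summing the resulting geometric series.

For the upper bound, write `P_j(k) = ∏_{m ≤ k} r(j + m)` with `r(m) = 1 - 1/(2(x+m)^α)`; the tails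
`T_j = ∑_k P_j(k)` satisfy `T_j = r(j) (1 + T_{j+1})`. Any nonnegative `g` with
`r(j) (1 + g(j+1)) ≤ g(j)` therefore dominates every partial sum of `T_0`. For `c > 2` the function
`g(j) = c (x+j)^α` qualifies once `x` is large, because `(y+1)^α - y^α → 0` when `α < 1`, so
`S(x) ≤ c x^α` eventually. Summability for every `x` follows, as shifting `x` by an integer only
rescales the tail of the series.
-/

open Finset Real Filter

theorem tendsto_rpow_add_one_sub_rpow {α : ℝ} (hα0 : 0 ≤ α) (hα1 : α < 1) :
    Tendsto (fun y : ℝ => (y + 1) ^ α - y ^ α) atTop (nhds 0) := by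
  have hdecay : Tendsto (fun y : ℝ => α * y ^ (α - 1)) atTop (nhds 0) := by
    simpa [neg_sub] using (tendsto_rpow_neg_atTop (sub_pos.2 hα1)).const_mul α
  refine tendsto_of_tendsto_of_tendsto_of_le_of_le' tendsto_const_nhds hdecay ?_ ?_
  · filter_upwards [eventually_ge_atTop 0] with y hy
    exact sub_nonneg.2 (rpow_le_rpow hy (by linarith) hα0)
  · filter_upwards [eventually_gt_atTop 0] with y hy
    have hbernoulli : (1 + y⁻¹) ^ α ≤ 1 + α * y⁻¹ :=
      rpow_one_add_le_one_add_mul_self (by linarith [inv_pos.2 hy]) hα0 hα1.le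
    calc (y + 1) ^ α - y ^ α = y ^ α * ((1 + y⁻¹) ^ α - 1) := by
          have hsplit : y + 1 = y * (1 + y⁻¹) := by field_simp
          rw [hsplit, mul_rpow hy.le (by positivity)]
          ring
      _ ≤ y ^ α * (α * y⁻¹) := by gcongr; linarith
      _ = α * y ^ (α - 1) := by rw [rpow_sub_one hy.ne']; ring

theorem sum_range_prod_le_of_step {r g : ℕ → ℝ} (hr : ∀ m, 0 ≤ r m) (hg : ∀ j, 0 ≤ g j)
    (hstep : ∀ j, r j * (1 + g (j + 1)) ≤ g j) (N : ℕ) :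
    ∑ k ∈ range N, ∏ m ∈ range (k + 1), r m ≤ g 0 := by
  induction N generalizing r g with
  | zero => simpa using hg 0
  | succ N ih =>
    have htail := ih (r := fun m => r (m + 1)) (g := fun j => g (j + 1))
      (fun m => hr _) (fun j => hg _) (fun j => hstep _)
    calc ∑ k ∈ range (N + 1), ∏ m ∈ range (k + 1), r m
        = r 0 * (1 + ∑ k ∈ range N, ∏ m ∈ range (k + 1), r (m + 1)) := by
          rw [sum_range_succ', mul_add, mul_one, mul_sum, add_comm]
          congr 1
          · simp
          · refine sum_congr rfl fun k _ => ?_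
            rw [prod_range_succ' _ (k + 1), mul_comm]
      _ ≤ r 0 * (1 + g 1) := by gcongr; exact hr 0
      _ ≤ g 0 := hstep 0

theorem div_one_sub_le_tsum_prod {r : ℕ → ℝ} {ρ : ℝ} (hρ0 : 0 ≤ ρ) (hρ1 : ρ < 1)
    (hr : ∀ m, ρ ≤ r m) (hs : Summable fun k => ∏ m ∈ range (k + 1), r m) :
    ρ / (1 - ρ) ≤ ∑' k, ∏ m ∈ range (k + 1), r m := by
  have hgeom : HasSum (fun k : ℕ => ρ * ρ ^ k) (ρ / (1 - ρ)) := by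
    simpa [div_eq_mul_inv] using (hasSum_geometric_of_lt_one hρ0 hρ1).mul_left ρ
  refine hgeom.tsum_eq ▸ hgeom.summable.tsum_le_tsum (fun k => ?_) hs
  calc ρ * ρ ^ k = ∏ _m ∈ range (k + 1), ρ := by rw [prod_const, card_range, pow_succ']
    _ ≤ ∏ m ∈ range (k + 1), r m := prod_le_prod (fun _ _ => hρ0) (fun m _ => hr m)

noncomputable def survival (α x : ℝ) (k : ℕ) : ℝ :=
  ∏ m ∈ range (k + 1), (1 - 1 / (2 * (x + m) ^ α))

theorem survival_add (α x : ℝ) (n k : ℕ) :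
    survival α x (k + n) =
      (∏ m ∈ range n, (1 - 1 / (2 * (x + m) ^ α))) * survival α (x + n) k := by
  simp only [survival, show k + n + 1 = n + (k + 1) by ring, prod_range_add, Nat.cast_add,
    add_assoc]

theorem one_sub_inv_two_rpow_nonneg {α y : ℝ} (hα : 0 ≤ α) (hy : 1 ≤ y) :
    0 ≤ 1 - 1 / (2 * y ^ α) := by
  have := one_le_rpow hy hα
  rw [sub_nonneg, div_le_one (by positivity)]
  linarith

theorem survival_nonneg {α x : ℝ} (hα : 0 ≤ α) (hx : 1 ≤ x) (k : ℕ) : 0 ≤ survival α x k :=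
  prod_nonneg fun m _ => one_sub_inv_two_rpow_nonneg hα (by linarith [m.cast_nonneg (α := ℝ)])

theorem eventually_step_le_mul_rpow {α c : ℝ} (hα0 : 0 ≤ α) (hα1 : α < 1) (hc : 2 < c) :
    ∀ᶠ y in atTop, (1 - 1 / (2 * y ^ α)) * (1 + c * (y + 1) ^ α) ≤ c * y ^ α := by
  have hgap : (0 : ℝ) < 1 / 2 - 1 / c := by
    rw [sub_pos, one_div_lt_one_div (by linarith) two_pos]; exact hc
  filter_upwards [(tendsto_rpow_add_one_sub_rpow hα0 hα1).eventually_le_const hgap,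
    eventually_ge_atTop 1] with y hd hy
  set t := y ^ α
  set d := (y + 1) ^ α - t
  have ht : 1 ≤ t := one_le_rpow hy hα0
  have hd0 : 0 ≤ d := sub_nonneg.2 (rpow_le_rpow (by linarith) (by linarith) hα0)
  have hcd : 1 + c * d ≤ c / 2 := by
    have hcd' := mul_le_mul_of_nonneg_left hd (by linarith : (0 : ℝ) ≤ c)
    have hgap' : c * (1 / 2 - 1 / c) = c / 2 - 1 := by field_simp
    linarith
  -- `(1 - 1/(2t)) * c t = c t - c/2`, so the step reduces to `(1 - 1/(2t)) (1 + c d) ≤ c/2`.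
  calc (1 - 1 / (2 * t)) * (1 + c * (y + 1) ^ α)
      = (1 - 1 / (2 * t)) * (1 + c * d) + (c * t - c / 2) := by
        simp only [d]; field_simp; ring
    _ ≤ (1 + c * d) + (c * t - c / 2) := by
        gcongr
        refine mul_le_of_le_one_left (add_nonneg zero_le_one (mul_nonneg (by linarith) hd0)) ?_
        linarith [one_div_pos.2 (by positivity : (0 : ℝ) < 2 * t)]
    _ ≤ c * t := by linarith

theorem eventually_tsum_survival_le {α c : ℝ} (hα0 : 0 ≤ α) (hα1 : α < 1) (hc : 2 < c) :
    ∀ᶠ x in atTop, Summable (survival α x) ∧ ∑' k, survival α x k ≤ c * x ^ α := by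
  obtain ⟨Y, hY⟩ := eventually_atTop.1 (eventually_step_le_mul_rpow hα0 hα1 hc)
  filter_upwards [eventually_ge_atTop Y, eventually_ge_atTop 1] with x hxY hx
  have hpartial : ∀ N, ∑ k ∈ range N, survival α x k ≤ c * x ^ α := by
    intro N
    simpa [survival] using sum_range_prod_le_of_step (r := fun m => 1 - 1 / (2 * (x + m) ^ α))
      (g := fun j => c * (x + j) ^ α)
      (fun m => one_sub_inv_two_rpow_nonneg hα0 (by linarith [m.cast_nonneg (α := ℝ)]))
      (fun j => by positivity)
      (fun j => by simpa [add_assoc] using hY (x + j) (by linarith [j.cast_nonneg (α := ℝ)])) N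
  exact ⟨summable_of_sum_range_le (survival_nonneg hα0 hx) hpartial,
    Real.tsum_le_of_sum_range_le (survival_nonneg hα0 hx) hpartial⟩

theorem summable_survival {α : ℝ} (hα0 : 0 ≤ α) (hα1 : α < 1) (x : ℝ) :
    Summable (survival α x) := by
  obtain ⟨Y, hY⟩ := eventually_atTop.1 (eventually_tsum_survival_le hα0 hα1 (c := 3) (by norm_num))
  obtain ⟨n, hn⟩ := exists_nat_ge (Y - x)
  refine (summable_nat_add_iff n).1 ?_
  simpa only [survival_add] using (hY (x + n) (by linarith)).1.mul_left _

theorem two_mul_rpow_sub_one_le_tsum_survival {α x : ℝ} (hα0 : 0 ≤ α) (hα1 : α < 1)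
    (hx : 1 ≤ x) : 2 * x ^ α - 1 ≤ ∑' k, survival α x k := by
  have hfirst : ∀ m : ℕ, 1 - 1 / (2 * x ^ α) ≤ 1 - 1 / (2 * (x + m) ^ α) := fun m => by
    gcongr
    linarith [m.cast_nonneg (α := ℝ)]
  calc 2 * x ^ α - 1 = (1 - 1 / (2 * x ^ α)) / (1 - (1 - 1 / (2 * x ^ α))) := by
        field_simp
        ring
    _ ≤ ∑' k, survival α x k :=
      div_one_sub_le_tsum_prod (one_sub_inv_two_rpow_nonneg hα0 hx) (by simp; positivity)
        hfirst (summable_survival hα0 hα1 x)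

theorem stmt2 (α : ℝ) (hα0 : 0 < α) (hα1 : α < 1)
    (S : ℝ → ℝ)
    (hS : ∀ x : ℝ, S x = ∑' k : ℕ, ∏ m ∈ Finset.range (k + 1), (1 - 1 / (2 * (x + m) ^ α))) :
    (∀ x : ℝ, 1 ≤ x →
      Summable (fun k : ℕ => ∏ m ∈ Finset.range (k + 1), (1 - 1 / (2 * (x + m) ^ α)))) ∧
    Tendsto (fun x : ℝ => x ^ (-α) * S x) atTop (nhds 2) := by
  refine ⟨fun x _ => summable_survival hα0.le hα1 x,
    tendsto_order.2 ⟨fun a ha => ?_, fun b hb => ?_⟩⟩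
  · filter_upwards [(tendsto_rpow_neg_atTop hα0).eventually_lt_const (sub_pos.2 ha),
      eventually_ge_atTop 1] with x hsmall hx
    calc a < 2 - x ^ (-α) := by linarith
      _ = x ^ (-α) * (2 * x ^ α - 1) := by
        rw [rpow_neg (by linarith)]; field_simp
      _ ≤ x ^ (-α) * S x := by
        rw [hS x]; gcongr; exact two_mul_rpow_sub_one_le_tsum_survival hα0.le hα1 hx
  · obtain ⟨c, hc2, hcb⟩ := exists_between hb
    filter_upwards [eventually_tsum_survival_le hα0.le hα1 hc2, eventually_gt_atTop 0]
      with x hupper hx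
    calc x ^ (-α) * S x ≤ x ^ (-α) * (c * x ^ α) := by rw [hS x]; gcongr; exact hupper.2
      _ = c := by rw [rpow_neg hx.le]; field_simp
      _ < b := hcb
end

section
/- Let 0 < α < 1, c > 0, and let (u_i)_{i≥0} be a sequence of reals with u_0 ≥ 1 satisfying u_{i+1} = u_i + 2 u_i^α + c for all i. Then u_i / i^{1/(1-α)} → (2(1-α))^{1/(1-α)} as i → ∞. -/
/-!
With `β = 1 - α`, the substitution `v = u ^ β` linearises the recurrence: writing
`u (i + 1) = u i * (1 + ε i)` with `ε i → 0`, the increment `v (i + 1) - v i` is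
`(a + c / u i ^ α) * ((1 + ε i) ^ β - 1) / ε i`, which tends to `a * β` because the second factor
is a difference quotient of `x ↦ x ^ β` at `1`. By Cesàro, `v i / i → a * β`, and raising to the
power `1 / β` gives the claim (the discrete analogue of solving `y' = a * y ^ α`).
-/

open Real Filter Topology

lemma tendsto_one_add_rpow_sub_one_div (β : ℝ) :
    Tendsto (fun t : ℝ => ((1 + t) ^ β - 1) / t) (𝓝[≠] 0) (𝓝 β) := by
  have hderiv : HasDerivAt (fun x : ℝ => x ^ β) β 1 := by
    simpa using hasDerivAt_rpow_const (x := 1) (p := β) (Or.inl one_ne_zero)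
  simpa [div_eq_inv_mul] using hasDerivAt_iff_tendsto_slope_zero.mp hderiv

lemma Filter.Tendsto.div_natCast_of_tendsto_sub {v : ℕ → ℝ} {l : ℝ}
    (h : Tendsto (fun n => v (n + 1) - v n) atTop (𝓝 l)) :
    Tendsto (fun n : ℕ => v n / n) atTop (𝓝 l) := by
  have hmean : Tendsto (fun n : ℕ => (n : ℝ)⁻¹ * (v n - v 0)) atTop (𝓝 l) := by
    simpa only [Finset.sum_range_sub] using h.cesaro
  have := hmean.add (tendsto_const_div_atTop_nhds_zero_nat (v 0))
  rw [add_zero] at this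
  exact this.congr fun n => by ring

lemma tendsto_div_rpow_one_div_of_tendsto_rpow_div {u : ℕ → ℝ} {β L : ℝ} (hu : ∀ n, 0 ≤ u n)
    (hβ : 0 < β) (h : Tendsto (fun n : ℕ => u n ^ β / n) atTop (𝓝 L)) :
    Tendsto (fun n : ℕ => u n / (n : ℝ) ^ (1 / β)) atTop (𝓝 (L ^ (1 / β))) := by
  refine (h.rpow_const (Or.inr (one_div_pos.mpr hβ).le)).congr fun n => ?_
  rw [div_rpow (rpow_nonneg (hu n) β) n.cast_nonneg, ← rpow_mul (hu n),
    mul_one_div_cancel hβ.ne', rpow_one]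

lemma add_rpow_one_sub_sub_rpow_one_sub {w a c α : ℝ} (hw : 0 < w) (hκ : 0 < a + c / w ^ α) :
    (w + a * w ^ α + c) ^ (1 - α) - w ^ (1 - α) =
      (a + c / w ^ α) * (((1 + (a + c / w ^ α) / w ^ (1 - α)) ^ (1 - α) - 1) /
        ((a + c / w ^ α) / w ^ (1 - α))) := by
  have hwα : 0 < w ^ α := rpow_pos_of_pos hw α
  have hwβ : 0 < w ^ (1 - α) := rpow_pos_of_pos hw _
  have hw_split : w ^ (1 - α) * w ^ α = w := by rw [← rpow_add hw, sub_add_cancel, rpow_one]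
  have hε : 0 < (a + c / w ^ α) / w ^ (1 - α) := div_pos hκ hwβ
  have hsucc : w + a * w ^ α + c = w * (1 + (a + c / w ^ α) / w ^ (1 - α)) := by
    field_simp
    linear_combination (a * w ^ α + c) * hw_split
  rw [hsucc, mul_rpow hw.le (by linarith), div_div_eq_mul_div, mul_div_cancel₀ _ hκ.ne']
  ring

section PowerRecurrence

variable {α a c : ℝ} {u : ℕ → ℝ}

lemma one_le_of_recurrence (ha : 0 ≤ a) (hc : 0 ≤ c) (hu0 : 1 ≤ u 0)
    (hrec : ∀ i, u (i + 1) = u i + a * u i ^ α + c) (i : ℕ) : 1 ≤ u i := by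
  induction i with
  | zero => exact hu0
  | succ n ih =>
    have : 0 ≤ a * u n ^ α := mul_nonneg ha (rpow_nonneg (by linarith) α)
    rw [hrec n]
    linarith

lemma tendsto_atTop_of_recurrence (hα : 0 ≤ α) (ha : 0 < a) (hc : 0 ≤ c) (hu0 : 1 ≤ u 0)
    (hrec : ∀ i, u (i + 1) = u i + a * u i ^ α + c) : Tendsto u atTop atTop := by
  have hlin : ∀ i : ℕ, 1 + a * i ≤ u i := by
    intro i
    induction i with
    | zero => simpa using hu0
    | succ n ih =>
      have : 1 ≤ u n ^ α := one_le_rpow (one_le_of_recurrence ha.le hc hu0 hrec n) hα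
      rw [hrec n]
      push_cast
      nlinarith
  refine tendsto_atTop_mono hlin (tendsto_atTop_add_const_left _ _ ?_)
  exact tendsto_natCast_atTop_atTop.const_mul_atTop ha

lemma tendsto_rpow_succ_sub_rpow_of_recurrence (hα0 : 0 < α) (hα1 : α < 1) (ha : 0 < a)
    (hc : 0 ≤ c) (hu0 : 1 ≤ u 0) (hrec : ∀ i, u (i + 1) = u i + a * u i ^ α + c) :
    Tendsto (fun i => u (i + 1) ^ (1 - α) - u i ^ (1 - α)) atTop (𝓝 (a * (1 - α))) := by
  have hpos : ∀ i, 0 < u i := fun i =>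
    zero_lt_one.trans_le (one_le_of_recurrence ha.le hc hu0 hrec i)
  have htop := tendsto_atTop_of_recurrence hα0.le ha hc hu0 hrec
  set κ : ℕ → ℝ := fun i => a + c / u i ^ α
  set ε : ℕ → ℝ := fun i => κ i / u i ^ (1 - α)
  have hκ : Tendsto κ atTop (𝓝 a) := by
    simpa using tendsto_const_nhds.add
      (tendsto_const_nhds.div_atTop ((tendsto_rpow_atTop hα0).comp htop))
  have hκ_pos : ∀ i, 0 < κ i := fun i => by
    have := rpow_pos_of_pos (hpos i) α
    positivity
  have hε : Tendsto ε atTop (𝓝[≠] 0) := by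
    refine tendsto_nhdsWithin_iff.mpr ⟨hκ.div_atTop
      ((tendsto_rpow_atTop (sub_pos.mpr hα1)).comp htop), Eventually.of_forall fun i => ?_⟩
    exact (div_pos (hκ_pos i) (rpow_pos_of_pos (hpos i) _)).ne'
  refine (hκ.mul ((tendsto_one_add_rpow_sub_one_div _).comp hε)).congr fun i => ?_
  rw [hrec i, add_rpow_one_sub_sub_rpow_one_sub (hpos i) (hκ_pos i)]
  rfl

theorem tendsto_div_rpow_of_recurrence (hα0 : 0 < α) (hα1 : α < 1) (ha : 0 < a) (hc : 0 ≤ c)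
    (hu0 : 1 ≤ u 0) (hrec : ∀ i, u (i + 1) = u i + a * u i ^ α + c) :
    Tendsto (fun i : ℕ => u i / (i : ℝ) ^ (1 / (1 - α))) atTop
      (𝓝 ((a * (1 - α)) ^ (1 / (1 - α)))) :=
  tendsto_div_rpow_one_div_of_tendsto_rpow_div
    (fun i => zero_le_one.trans (one_le_of_recurrence ha.le hc hu0 hrec i)) (sub_pos.mpr hα1)
    (tendsto_rpow_succ_sub_rpow_of_recurrence hα0 hα1 ha hc hu0 hrec).div_natCast_of_tendsto_sub

end PowerRecurrence

theorem stmt4 (α c : ℝ) (hα0 : 0 < α) (hα1 : α < 1) (hc : 0 < c)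
    (u : ℕ → ℝ) (hu0 : 1 ≤ u 0)
    (hrec : ∀ i : ℕ, u (i + 1) = u i + 2 * u i ^ α + c) :
    Tendsto (fun i : ℕ => u i / (i : ℝ) ^ (1 / (1 - α))) atTop
      (nhds ((2 * (1 - α)) ^ (1 / (1 - α)))) :=
  tendsto_div_rpow_of_recurrence hα0 hα1 two_pos hc.le hu0 hrec
end

section
/- Let 0 < α < 1 and real a > 0. If x_n, y_n are sequences with x_n ≥ 1 and x_n ≤ n^{1/(2(1-α)) + ε} for some ε < 1/(2α)·(1/2 − αε'), and set L_n = ⌈a n^{1/(2(1-α))}⌉. Then ∏_{m = x_n + L_n/2}^{x_n + L_n} (1 − m^{-α}/2) ≤ exp(−(1/(2(1-α)))((x_n + L_n)^{1-α} − (x_n + L_n/2)^{1-α})), and this bound tends to 0 as n → ∞. -/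
/-!
Each factor satisfies `1 - m^{-α}/2 ≤ exp(-m^{-α}/2)`, and by concavity of `u ↦ u^{1-α}` the sum
`∑_{m=S}^{T} m^{-α}` dominates `(T^{1-α} - S^{1-α}) / (1-α)`, which gives the product bound.
Concavity also gives `T^{1-α} - S^{1-α} ≥ (1-α) T^{-α} (T - S)`. Since `T - S ≥ L/2 ≳ n^β` and
`T ≲ n^{β+ε}` with `β = 1/(2(1-α))`, this is `≳ n^{β - α(β+ε)} = n^{1/2 - αε} → ∞`.
-/

open Real Finset Filter

lemma rpow_sub_rpow_le_mul_rpow_sub_one {p x y : ℝ} (hp0 : 0 ≤ p) (hp1 : p ≤ 1) (hx : 0 < x)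
    (hy : 0 ≤ y) : y ^ p - x ^ p ≤ p * x ^ (p - 1) * (y - x) := by
  have hB := rpow_one_add_le_one_add_mul_self (s := y / x - 1)
    (by linarith [div_nonneg hy hx.le]) hp0 hp1
  rw [add_sub_cancel, div_rpow hy hx.le, div_le_iff₀ (rpow_pos_of_pos hx p)] at hB
  rw [rpow_sub_one hx.ne']
  calc y ^ p - x ^ p ≤ (1 + p * (y / x - 1)) * x ^ p - x ^ p := by gcongr
    _ = p * (x ^ p / x) * (y - x) := by field_simp; ring

lemma rpow_sub_rpow_le_mul_sum_rpow_sub_one {p : ℝ} (hp0 : 0 ≤ p) (hp1 : p ≤ 1) {S T : ℕ}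
    (hS : 1 ≤ S) (hST : S ≤ T) :
    (T : ℝ) ^ p - (S : ℝ) ^ p ≤ p * ∑ m ∈ Icc S T, (m : ℝ) ^ (p - 1) := by
  have hstep : ∀ m ∈ Ico S T,
      ((m + 1 : ℕ) : ℝ) ^ p - (m : ℝ) ^ p ≤ p * (m : ℝ) ^ (p - 1) := fun m hm => by
    have hm : (0 : ℝ) < m := Nat.cast_pos.mpr (hS.trans (mem_Ico.mp hm).1)
    simpa using rpow_sub_rpow_le_mul_rpow_sub_one hp0 hp1 hm (y := m + 1) (by positivity)
  calc (T : ℝ) ^ p - (S : ℝ) ^ p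
      = ∑ m ∈ Ico S T, (((m + 1 : ℕ) : ℝ) ^ p - (m : ℝ) ^ p) :=
        (sum_Ico_sub (fun m : ℕ => (m : ℝ) ^ p) hST).symm
    _ ≤ ∑ m ∈ Ico S T, p * (m : ℝ) ^ (p - 1) := sum_le_sum hstep
    _ ≤ p * ∑ m ∈ Icc S T, (m : ℝ) ^ (p - 1) := by
        rw [← mul_sum]
        gcongr
        exact Ico_subset_Icc_self

lemma prod_one_sub_le_exp_neg_sum {ι : Type*} (s : Finset ι) {f : ι → ℝ}
    (hf : ∀ i ∈ s, f i ≤ 1) : ∏ i ∈ s, (1 - f i) ≤ exp (-∑ i ∈ s, f i) := by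
  rw [← sum_neg_distrib, exp_sum]
  exact prod_le_prod (fun i hi => by linarith [hf i hi])
    fun i _ => by linarith [add_one_le_exp (-f i)]

lemma prod_Icc_one_sub_rpow_neg_div_two_le {α : ℝ} (hα0 : 0 ≤ α) (hα1 : α < 1) {S T : ℕ}
    (hS : 1 ≤ S) (hST : S ≤ T) :
    ∏ m ∈ Icc S T, (1 - (m : ℝ) ^ (-α) / 2) ≤
      exp (-(1 / (2 * (1 - α))) * ((T : ℝ) ^ (1 - α) - (S : ℝ) ^ (1 - α))) := by
  have hsum := rpow_sub_rpow_le_mul_sum_rpow_sub_one (p := 1 - α) (by linarith) (by linarith)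
    hS hST
  rw [sub_sub_cancel_left] at hsum
  refine (prod_one_sub_le_exp_neg_sum _ fun m hm => ?_).trans (exp_le_exp.mpr ?_)
  · have hm : (1 : ℝ) ≤ m := by exact_mod_cast hS.trans (mem_Icc.mp hm).1
    linarith [rpow_le_one_of_one_le_of_nonpos hm (neg_nonpos.mpr hα0)]
  · rw [← sum_div, neg_mul, neg_le_neg_iff, one_div_mul_eq_div,
      div_le_div_iff₀ (by linarith) two_pos]
    linarith

lemma tendsto_rpow_sub_rpow_atTop {α β γ A B : ℝ} (hα0 : 0 ≤ α) (hα1 : α < 1) (hA : 0 < A)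
    (hB : 0 < B) (hγ : α * γ < β) {s t : ℕ → ℝ} (hs : ∀ n, 0 ≤ s n) (ht : ∀ n, 0 < t n)
    (htA : ∀ᶠ n : ℕ in atTop, t n ≤ A * (n : ℝ) ^ γ)
    (hts : ∀ᶠ n : ℕ in atTop, B * (n : ℝ) ^ β ≤ t n - s n) :
    Tendsto (fun n : ℕ => t n ^ (1 - α) - s n ^ (1 - α)) atTop atTop := by
  have h1α : 0 < 1 - α := by linarith
  have hc : 0 < (1 - α) * A ^ (-α) * B := by have := rpow_pos_of_pos hA (-α); positivity
  refine tendsto_atTop_mono' _ ?_ (((tendsto_rpow_atTop (sub_pos.mpr hγ)).comp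
    tendsto_natCast_atTop_atTop).const_mul_atTop hc)
  filter_upwards [eventually_ge_atTop 1, htA, hts] with n hn htA hts
  have hn : (0 : ℝ) < n := by exact_mod_cast hn
  have htn := ht n
  have htan := rpow_sub_rpow_le_mul_rpow_sub_one (p := 1 - α) (by linarith) (by linarith)
    htn (hs n)
  rw [sub_sub_cancel_left] at htan
  have hpow : (A * (n : ℝ) ^ γ) ^ (-α) ≤ t n ^ (-α) :=
    rpow_le_rpow_of_nonpos htn htA (neg_nonpos.mpr hα0)
  rw [mul_rpow hA.le (by positivity), ← rpow_mul hn.le] at hpow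
  calc (1 - α) * A ^ (-α) * B * (n : ℝ) ^ (β - α * γ)
      = (1 - α) * (A ^ (-α) * (n : ℝ) ^ (γ * -α)) * (B * (n : ℝ) ^ β) := by
        rw [show β - α * γ = γ * -α + β by ring, rpow_add hn]; ring
    _ ≤ (1 - α) * t n ^ (-α) * (t n - s n) := by gcongr
    _ ≤ t n ^ (1 - α) - s n ^ (1 - α) := by linarith

theorem stmt16 (α a ε : ℝ) (hα0 : 0 < α) (hα1 : α < 1) (ha : 0 < a)
    (hε0 : 0 < ε) (hε : α * ε < 1 / 2)
    (x L : ℕ → ℕ) (hx1 : ∀ n, 1 ≤ x n)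
    (hx : ∀ n : ℕ, (x n : ℝ) ≤ (n : ℝ) ^ (1 / (2 * (1 - α)) + ε))
    (hL : ∀ n : ℕ, L n = ⌈a * (n : ℝ) ^ (1 / (2 * (1 - α)))⌉₊) :
    (∀ n : ℕ,
      ∏ m ∈ Finset.Icc (x n + L n / 2) (x n + L n), (1 - (m : ℝ) ^ (-α) / 2) ≤
        Real.exp (-(1 / (2 * (1 - α))) *
          (((x n + L n : ℕ) : ℝ) ^ (1 - α) - ((x n + L n / 2 : ℕ) : ℝ) ^ (1 - α)))) ∧
    Tendsto (fun n : ℕ =>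
      Real.exp (-(1 / (2 * (1 - α))) *
        (((x n + L n : ℕ) : ℝ) ^ (1 - α) - ((x n + L n / 2 : ℕ) : ℝ) ^ (1 - α))))
      atTop (nhds 0) := by
  have h1α : 0 < 1 - α := by linarith
  set β := 1 / (2 * (1 - α)) with hβ
  have hβ0 : 0 < β := by positivity
  have hβα : β * (1 - α) = 1 / 2 := by rw [hβ]; field_simp
  have hS1 : ∀ n, 1 ≤ x n + L n / 2 := fun n => (hx1 n).trans (Nat.le_add_right _ _)
  have hST : ∀ n, x n + L n / 2 ≤ x n + L n := fun n => by omega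
  refine ⟨fun n => prod_Icc_one_sub_rpow_neg_div_two_le hα0.le hα1 (hS1 n) (hST n), ?_⟩
  have hgap := tendsto_rpow_sub_rpow_atTop (A := a + 2) (B := a / 2) (γ := β + ε)
    (s := fun n => ((x n + L n / 2 : ℕ) : ℝ)) (t := fun n => ((x n + L n : ℕ) : ℝ))
    hα0.le hα1 (by linarith) (by linarith) (by linarith) (fun n => by positivity)
    (fun n => by exact_mod_cast (hS1 n).trans (hST n)) ?_ ?_
  · exact tendsto_exp_atBot.comp (hgap.const_mul_atTop_of_neg (neg_neg_of_pos hβ0))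
  · filter_upwards [eventually_ge_atTop 1] with n hn
    have hn : (1 : ℝ) ≤ n := by exact_mod_cast hn
    have hLup : (L n : ℝ) < a * (n : ℝ) ^ β + 1 := hL n ▸ Nat.ceil_lt_add_one (by positivity)
    have hβε : (n : ℝ) ^ β ≤ (n : ℝ) ^ (β + ε) := rpow_le_rpow_of_exponent_le hn (by linarith)
    have h1 : (1 : ℝ) ≤ (n : ℝ) ^ (β + ε) := one_le_rpow hn (by positivity)
    push_cast
    nlinarith [hx n]
  · refine Eventually.of_forall fun n => ?_
    have hLlow : a * (n : ℝ) ^ β ≤ L n := hL n ▸ Nat.le_ceil _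
    have hhalf : ((L n / 2 : ℕ) : ℝ) ≤ L n / 2 := Nat.cast_div_le
    push_cast
    linarith
end
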